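/- Path conversion: if (e, ρ̃, ãκ) ∈ r̃ where wf(ξ̃, (r̃, σ̃, σ̃κ)) and (r̂, σ̂) is a fixed point of the unbounded-stack widened transfer relation ((r̂, σ̂) ⤳̂Ξ (r̂, σ̂)), then every finite-state path ((e₀, ∅, ã_halt), ε) ↪̃ ((e, ρ̃, ãκ), ψ̃) (via ξ̃, (r̃, σ̃, σ̃κ)) implies a corresponding unbounded-stack path (e₀, ∅, ε) ↪̂ H_C((e, ρ̃, ãκ), ψ̃) (via r̂, σ̂), under Assumptions 1–3. (Lemma: Path conversion.) -/

import Mathlib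

/-!
Formalization of the P4F ("Pushdown Control-Flow Analysis for Free") framework:
ANF λ-calculus syntax, the finite-state abstract machine with store-allocated
continuations (P4F continuation allocator), the store-widened analysis, the
unbounded-stack abstract machine and its widened analysis, implied stacks,
sub-step relations, finite-state and unbounded-stack paths, well-formedness,
conversion functions induced by an address bijection, and the precision
relations.
-/

namespace P4F

/-! ANF syntax: expressions, atomic expressions, lambdas. -/
mutual
inductive Exp (Var : Type) : Type where
  | letCall (y : Var) (f : AExp Var) (ae : AExp Var) (body : Exp Var)
  | ret (ae : AExp Var)
inductive AExp (Var : Type) : Type where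
  | var (x : Var)
  | lam (l : Lam Var)
inductive Lam (Var : Type) : Type where
  | mk (x : Var) (body : Exp Var)
end

variable {Var Addr HAddr : Type}

/-- Pointwise containment of set-valued stores. -/
def SubStore {A B : Type} (σ σ' : A → Set B) : Prop := ∀ a, σ a ⊆ σ' a

open Classical in
/-- Join a set-valued store with a single-point store: `σ ⊔ [a ↦ d]`. -/
noncomputable def joinOne {A B : Type} (σ : A → Set B) (a : A) (d : Set B) : A → Set B :=
  fun a' => if a' = a then σ a' ∪ d else σ a'

/-- Binding environments: partial maps from variables to addresses. -/
abbrev EnvF (Var Addr : Type) : Type := Var → Option Addr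
/-- Abstract closures. -/
abbrev CloF (Var Addr : Type) : Type := Lam Var × EnvF Var Addr
/-- Value stores. -/
abbrev StoreF (Var Addr : Type) : Type := Addr → Set (CloF Var Addr)
/-- Stack frames. -/
abbrev FrameF (Var Addr : Type) : Type := Var × Exp Var × EnvF Var Addr
/-- Continuation addresses for the P4F allocator: either the halt address
    (`none`) or a pair of a target expression and environment. -/
abbrev KAddrF (Var Addr : Type) : Type := Option (Exp Var × EnvF Var Addr)
/-- Continuations: a topmost frame paired with the address of the rest of the stack. -/
abbrev KontF (Var Addr : Type) : Type := FrameF Var Addr × KAddrF Var Addr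
/-- Continuation stores. -/
abbrev KStoreF (Var Addr : Type) : Type := KAddrF Var Addr → Set (KontF Var Addr)

def emptyEnv : EnvF Var Addr := fun _ => none
def botStore : StoreF Var Addr := fun _ => ∅
def botKStore : KStoreF Var Addr := fun _ => ∅
/-- The distinguished halt continuation address. -/
def ahalt : KAddrF Var Addr := none

open Classical in
/-- Environment extension `ρ[x ↦ a]`. -/
noncomputable def upd (ρ : EnvF Var Addr) (x : Var) (a : Addr) : EnvF Var Addr :=
  fun y => if y = x then some a else ρ y

/-- Abstract atomic-expression evaluation. -/
def aeval : AExp Var → EnvF Var Addr → StoreF Var Addr → Set (CloF Var Addr)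
  | AExp.var x, ρ, σ =>
    match ρ x with
    | some a => σ a
    | none => ∅
  | AExp.lam l, ρ, _ => {(l, ρ)}

/-- Finite-state machine states `ς̃ = (e, ρ̃, σ̃, σ̃κ, ãκ)`. -/
structure StateF (Var Addr : Type) : Type where
  e : Exp Var
  ρ : EnvF Var Addr
  σ : StoreF Var Addr
  σκ : KStoreF Var Addr
  aκ : KAddrF Var Addr

/-- The finite-state transition relation `⤳̃Σ`, parametrized by the value
    allocator; the continuation allocator is the P4F allocator
    `alloc̃κ(ς̃, e', ρ̃', σ̃') = (e', ρ̃')`. -/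
inductive StepF (alloc : Var → StateF Var Addr → Addr) :
    StateF Var Addr → StateF Var Addr → Prop where
  | call {y x : Var} {f ae : AExp Var} {e e' : Exp Var} {ρ ρlam : EnvF Var Addr}
      {σ : StoreF Var Addr} {σκ : KStoreF Var Addr} {aκ : KAddrF Var Addr} :
      (Lam.mk x e', ρlam) ∈ aeval f ρ σ →
      StepF alloc ⟨Exp.letCall y f ae e, ρ, σ, σκ, aκ⟩
        ⟨e',
         upd ρlam x (alloc x ⟨Exp.letCall y f ae e, ρ, σ, σκ, aκ⟩),
         joinOne σ (alloc x ⟨Exp.letCall y f ae e, ρ, σ, σκ, aκ⟩) (aeval ae ρ σ),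
         joinOne σκ (some (e', upd ρlam x (alloc x ⟨Exp.letCall y f ae e, ρ, σ, σκ, aκ⟩)))
           {((y, e, ρ), aκ)},
         some (e', upd ρlam x (alloc x ⟨Exp.letCall y f ae e, ρ, σ, σκ, aκ⟩))⟩
  | ret {x : Var} {ae : AExp Var} {e : Exp Var} {ρ ρκ : EnvF Var Addr}
      {σ : StoreF Var Addr} {σκ : KStoreF Var Addr} {aκ aκ' : KAddrF Var Addr} :
      ((x, e, ρκ), aκ') ∈ σκ aκ →
      StepF alloc ⟨Exp.ret ae, ρ, σ, σκ, aκ⟩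
        ⟨e, upd ρκ x (alloc x ⟨Exp.ret ae, ρ, σ, σκ, aκ⟩),
         joinOne σ (alloc x ⟨Exp.ret ae, ρ, σ, σκ, aκ⟩) (aeval ae ρ σ),
         σκ, aκ'⟩

/-- Finite-state configurations `c̃ = (e, ρ̃, ãκ)`. -/
abbrev ConfF (Var Addr : Type) : Type := Exp Var × EnvF Var Addr × KAddrF Var Addr

/-- Widened state spaces `ξ̃ = (r̃, σ̃, σ̃κ)`. -/
structure XiF (Var Addr : Type) : Type where
  r : Set (ConfF Var Addr)
  σ : StoreF Var Addr
  σκ : KStoreF Var Addr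

def initConfF (e0 : Exp Var) : ConfF Var Addr := (e0, emptyEnv, ahalt)
def initStateF (e0 : Exp Var) : StateF Var Addr := ⟨e0, emptyEnv, botStore, botKStore, ahalt⟩
/-- The initial widened result `({(e₀, ∅, ã_halt)}, ⊥, ⊥)`. -/
def initXiF (e0 : Exp Var) : XiF Var Addr := ⟨{initConfF e0}, botStore, botKStore⟩

/-- The state obtained by pairing a configuration with the global stores. -/
def stateOfF (ξ : XiF Var Addr) (c : ConfF Var Addr) : StateF Var Addr :=
  ⟨c.1, c.2.1, ξ.σ, ξ.σκ, c.2.2⟩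

/-- The set `s̃` of all successors of the reachable configurations under the
    global stores, together with the injected initial state. -/
def succSetF (alloc : Var → StateF Var Addr → Addr) (e0 : Exp Var)
    (ξ : XiF Var Addr) : Set (StateF Var Addr) :=
  insert (initStateF e0) {ς' | ∃ c ∈ ξ.r, StepF alloc (stateOfF ξ c) ς'}

/-- The widened transfer relation `⤳̃Ξ`. -/
def XiStepF (alloc : Var → StateF Var Addr → Addr) (e0 : Exp Var)
    (ξ ξ' : XiF Var Addr) : Prop :=
  ξ'.r = {c | ∃ ς ∈ succSetF alloc e0 ξ, c = (ς.e, ς.ρ, ς.aκ)} ∧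
  ξ'.σ = (fun a => ⋃ ς ∈ succSetF alloc e0 ξ, ς.σ a) ∧
  ξ'.σκ = (fun aκ => ⋃ ς ∈ succSetF alloc e0 ξ, ς.σκ aκ)

/-- Implied stacks: `ψ̃ ∈ψ ãκ (via σ̃κ)`. -/
inductive Implied (σκ : KStoreF Var Addr) : KAddrF Var Addr → List (KontF Var Addr) → Prop where
  | halt : Implied σκ ahalt []
  | cons {φ : FrameF Var Addr} {aκ' aκ : KAddrF Var Addr} {ψ : List (KontF Var Addr)} :
      (φ, aκ') ∈ σκ aκ → Implied σκ aκ' ψ → aκ ≠ ahalt →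
      Implied σκ aκ ((φ, aκ') :: ψ)

/-- The finite-state sub-step relation `⤳⊑̃`. -/
def SubStepF (alloc : Var → StateF Var Addr → Addr) (ς ς' : StateF Var Addr) : Prop :=
  ∃ σ₁ σκ₁ σ₂ σκ₂,
    StepF alloc ⟨ς.e, ς.ρ, σ₁, σκ₁, ς.aκ⟩ ⟨ς'.e, ς'.ρ, σ₂, σκ₂, ς'.aκ⟩ ∧
    SubStore σ₁ ς.σ ∧ SubStore σκ₁ ς.σκ ∧ SubStore σ₂ ς'.σ ∧ SubStore σκ₂ ς'.σκ

/-- The finite-state sub-step relation `⤳⊑̃ (with ã, clo)`. -/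
def SubStepFWithClo (alloc : Var → StateF Var Addr → Addr) (ς ς' : StateF Var Addr)
    (a : Addr) (clo : CloF Var Addr) : Prop :=
  ∃ σ₁ σκ₁ σ₂ σκ₂,
    StepF alloc ⟨ς.e, ς.ρ, σ₁, σκ₁, ς.aκ⟩ ⟨ς'.e, ς'.ρ, σ₂, σκ₂, ς'.aκ⟩ ∧
    SubStore σ₁ ς.σ ∧ SubStore σκ₁ ς.σκ ∧ SubStore σ₂ ς'.σ ∧ SubStore σκ₂ ς'.σκ ∧
    clo ∈ σ₂ a

/-- The finite-state sub-step relation `⤳⊑̃ (with κ̃, ã''κ)`. -/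
def SubStepFWithKont (alloc : Var → StateF Var Addr → Addr) (ς ς' : StateF Var Addr)
    (aκ'' : KAddrF Var Addr) (κ : KontF Var Addr) : Prop :=
  ∃ σ₁ σκ₁ σ₂ σκ₂,
    StepF alloc ⟨ς.e, ς.ρ, σ₁, σκ₁, ς.aκ⟩ ⟨ς'.e, ς'.ρ, σ₂, σκ₂, ς'.aκ⟩ ∧
    SubStore σ₁ ς.σ ∧ SubStore σκ₁ ς.σκ ∧ SubStore σ₂ ς'.σ ∧ SubStore σκ₂ ς'.σκ ∧
    κ ∈ σκ₂ aκ''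

/-- Finite-state paths `(c̃, ψ̃) ↪̃ (c̃', ψ̃') (via ξ̃, ξ̃')`. -/
inductive PathF (alloc : Var → StateF Var Addr → Addr) (ξ ξ' : XiF Var Addr) :
    ConfF Var Addr × List (KontF Var Addr) →
    ConfF Var Addr × List (KontF Var Addr) → Prop where
  | refl {e : Exp Var} {ρ : EnvF Var Addr} {aκ : KAddrF Var Addr}
      {ψ : List (KontF Var Addr)} :
      (e, ρ, aκ) ∈ ξ'.r → Implied ξ'.σκ aκ ψ →
      PathF alloc ξ ξ' ((e, ρ, aκ), ψ) ((e, ρ, aκ), ψ)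
  | ret {c : ConfF Var Addr} {ψ₀ : List (KontF Var Addr)} {ae : AExp Var}
      {ρ'' ρκ : EnvF Var Addr} {aκ'' aκ' : KAddrF Var Addr} {x : Var} {e' : Exp Var}
      {ψ' : List (KontF Var Addr)} :
      PathF alloc ξ ξ' (c, ψ₀) ((Exp.ret ae, ρ'', aκ''), ((x, e', ρκ), aκ') :: ψ') →
      (Exp.ret ae, ρ'', aκ'') ∈ ξ.r →
      ((x, e', ρκ), aκ') ∈ ξ.σκ aκ'' →
      (e', upd ρκ x (alloc x ⟨Exp.ret ae, ρ'', ξ.σ, ξ.σκ, aκ''⟩), aκ') ∈ ξ'.r →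
      SubStepF alloc ⟨Exp.ret ae, ρ'', ξ.σ, ξ.σκ, aκ''⟩
        ⟨e', upd ρκ x (alloc x ⟨Exp.ret ae, ρ'', ξ.σ, ξ.σκ, aκ''⟩), ξ'.σ, ξ'.σκ, aκ'⟩ →
      PathF alloc ξ ξ' (c, ψ₀)
        ((e', upd ρκ x (alloc x ⟨Exp.ret ae, ρ'', ξ.σ, ξ.σκ, aκ''⟩), aκ'), ψ')
  | call {c : ConfF Var Addr} {ψ₀ : List (KontF Var Addr)} {x : Var}
      {f ae : AExp Var} {e'' e' : Exp Var} {ρ'' ρ' : EnvF Var Addr}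
      {aκ'' aκ' : KAddrF Var Addr} {ψ' : List (KontF Var Addr)} :
      PathF alloc ξ ξ' (c, ψ₀) ((Exp.letCall x f ae e'', ρ'', aκ''), ψ') →
      ((x, e'', ρ''), aκ'') ∈ ξ'.σκ aκ' →
      SubStepF alloc ⟨Exp.letCall x f ae e'', ρ'', ξ.σ, ξ.σκ, aκ''⟩
        ⟨e', ρ', ξ'.σ, ξ'.σκ, aκ'⟩ →
      PathF alloc ξ ξ' (c, ψ₀) ((e', ρ', aκ'), ((x, e'', ρ''), aκ'') :: ψ')

/-- `Entry` maps a continuation address to the entry-point configuration of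
    the function invocation whose configurations use that address. -/
def Entry (e0 : Exp Var) : KAddrF Var Addr → ConfF Var Addr
  | none => (e0, emptyEnv, ahalt)
  | some (eκ, ρκ) => (eκ, ρκ, some (eκ, ρκ))

/-- The non-recursive well-formedness sub-properties
    `wf_⊑ ∧ wf_init ∧ wf_halt ∧ wf_r̃ ∧ wf_σ̃ ∧ wf_σ̃κ`. -/
def WFRest (alloc : Var → StateF Var Addr → Addr) (e0 : Exp Var)
    (ξ ξ' : XiF Var Addr) : Prop :=
  (ξ.r ⊆ ξ'.r ∧ SubStore ξ.σ ξ'.σ ∧ SubStore ξ.σκ ξ'.σκ) ∧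
  (initConfF e0 ∈ ξ'.r) ∧
  (∀ κ : KontF Var Addr, κ ∉ ξ'.σκ ahalt) ∧
  (∀ c ∈ ξ'.r, ∃ ψ, Implied ξ'.σκ c.2.2 ψ ∧
      PathF alloc ξ ξ' (initConfF e0, []) (c, ψ)) ∧
  (∀ (a : Addr) (clo : CloF Var Addr), clo ∈ ξ'.σ a →
      ∃ c ∈ ξ.r, ∃ c' ∈ ξ'.r,
        SubStepFWithClo alloc (stateOfF ξ c) (stateOfF ξ' c') a clo) ∧
  (∀ (aκ' : KAddrF Var Addr) (x : Var) (e : Exp Var) (ρκ : EnvF Var Addr)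
      (aκ : KAddrF Var Addr), ((x, e, ρκ), aκ) ∈ ξ'.σκ aκ' →
      ∃ (eκ' : Exp Var) (ρκ' : EnvF Var Addr), aκ' = some (eκ', ρκ') ∧
        Entry e0 aκ' ∈ ξ'.r ∧
        ∃ (f ae : AExp Var), (Exp.letCall x f ae e, ρκ, aκ) ∈ ξ.r ∧
          SubStepFWithKont alloc ⟨Exp.letCall x f ae e, ρκ, ξ.σ, ξ.σκ, aκ⟩
            ⟨eκ', ρκ', ξ'.σ, ξ'.σκ, aκ'⟩ aκ' ((x, e, ρκ), aκ))

/-- Well-formedness `wf(ξ̃, ξ̃')`. -/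
inductive WF (alloc : Var → StateF Var Addr → Addr) (e0 : Exp Var) :
    XiF Var Addr → XiF Var Addr → Prop where
  | init :
      WFRest alloc e0 (initXiF e0) (initXiF e0) →
      WF alloc e0 (initXiF e0) (initXiF e0)
  | step {ξ'' ξ ξ' : XiF Var Addr} :
      WF alloc e0 ξ'' ξ → XiStepF alloc e0 ξ ξ' → WFRest alloc e0 ξ ξ' →
      WF alloc e0 ξ ξ'

/-! ### The unbounded-stack machine -/

/-- Unbounded-stack machine states `ς̂ = (e, ρ̂, σ̂, κ̂)`. -/
structure StateH (Var HAddr : Type) : Type where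
  e : Exp Var
  ρ : EnvF Var HAddr
  σ : StoreF Var HAddr
  κ : List (FrameF Var HAddr)

/-- The unbounded-stack transition relation `⤳̂Σ`. -/
inductive StepH (halloc : Var → StateH Var HAddr → HAddr) :
    StateH Var HAddr → StateH Var HAddr → Prop where
  | call {y x : Var} {f ae : AExp Var} {e e' : Exp Var} {ρ ρlam : EnvF Var HAddr}
      {σ : StoreF Var HAddr} {κ : List (FrameF Var HAddr)} :
      (Lam.mk x e', ρlam) ∈ aeval f ρ σ →
      StepH halloc ⟨Exp.letCall y f ae e, ρ, σ, κ⟩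
        ⟨e', upd ρlam x (halloc x ⟨Exp.letCall y f ae e, ρ, σ, κ⟩),
         joinOne σ (halloc x ⟨Exp.letCall y f ae e, ρ, σ, κ⟩) (aeval ae ρ σ),
         (y, e, ρ) :: κ⟩
  | ret {x : Var} {ae : AExp Var} {e : Exp Var} {ρ ρκ : EnvF Var HAddr}
      {σ : StoreF Var HAddr} {κ : List (FrameF Var HAddr)} :
      StepH halloc ⟨Exp.ret ae, ρ, σ, (x, e, ρκ) :: κ⟩
        ⟨e, upd ρκ x (halloc x ⟨Exp.ret ae, ρ, σ, (x, e, ρκ) :: κ⟩),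
         joinOne σ (halloc x ⟨Exp.ret ae, ρ, σ, (x, e, ρκ) :: κ⟩) (aeval ae ρ σ),
         κ⟩

/-- Unbounded-stack configurations `ĉ = (e, ρ̂, κ̂)`. -/
abbrev ConfH (Var HAddr : Type) : Type := Exp Var × EnvF Var HAddr × List (FrameF Var HAddr)

/-- Unbounded-stack widened state spaces `ξ̂ = (r̂, σ̂)`. -/
structure XiH (Var HAddr : Type) : Type where
  r : Set (ConfH Var HAddr)
  σ : StoreF Var HAddr

def initConfH (e0 : Exp Var) : ConfH Var HAddr := (e0, emptyEnv, [])
def initStateH (e0 : Exp Var) : StateH Var HAddr := ⟨e0, emptyEnv, botStore, []⟩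

def succSetH (halloc : Var → StateH Var HAddr → HAddr) (e0 : Exp Var)
    (ξ : XiH Var HAddr) : Set (StateH Var HAddr) :=
  insert (initStateH e0) {ς' | ∃ c ∈ ξ.r, StepH halloc ⟨c.1, c.2.1, ξ.σ, c.2.2⟩ ς'}

/-- The unbounded-stack widened transfer relation `⤳̂Ξ`. -/
def XiStepH (halloc : Var → StateH Var HAddr → HAddr) (e0 : Exp Var)
    (ξ ξ' : XiH Var HAddr) : Prop :=
  ξ'.r = {c | ∃ ς ∈ succSetH halloc e0 ξ, c = (ς.e, ς.ρ, ς.κ)} ∧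
  ξ'.σ = (fun a => ⋃ ς ∈ succSetH halloc e0 ξ, ς.σ a)

/-- The unbounded-stack sub-step relation `⤳⊑̂`. -/
def SubStepH (halloc : Var → StateH Var HAddr → HAddr) (ς ς' : StateH Var HAddr) : Prop :=
  ∃ σ₂, StepH halloc ⟨ς.e, ς.ρ, ς.σ, ς.κ⟩ ⟨ς'.e, ς'.ρ, σ₂, ς'.κ⟩ ∧ SubStore σ₂ ς'.σ

/-- Unbounded-stack paths `ĉ ↪̂ ĉ' (via r̂, σ̂)`. -/
inductive PathH (halloc : Var → StateH Var HAddr → HAddr)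
    (rH : Set (ConfH Var HAddr)) (σH : StoreF Var HAddr) :
    ConfH Var HAddr → ConfH Var HAddr → Prop where
  | refl (c : ConfH Var HAddr) : PathH halloc rH σH c c
  | step {c c' : ConfH Var HAddr} {e' : Exp Var} {ρ' : EnvF Var HAddr}
      {κ' : List (FrameF Var HAddr)} :
      PathH halloc rH σH c c' →
      SubStepH halloc ⟨c'.1, c'.2.1, σH, c'.2.2⟩ ⟨e', ρ', σH, κ'⟩ →
      PathH halloc rH σH c (e', ρ', κ')

/-! ### Conversions and precision relations (Assumption 1) -/

/-- `H_Env` induced by the address bijection. -/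
def HEnv (HA : Addr ≃ HAddr) (ρ : EnvF Var Addr) : EnvF Var HAddr :=
  fun x => (ρ x).map HA

/-- `H_Clo`. -/
def HClo (HA : Addr ≃ HAddr) (clo : CloF Var Addr) : CloF Var HAddr :=
  (clo.1, HEnv HA clo.2)

/-- `H_Frame`. -/
def HFrame (HA : Addr ≃ HAddr) (φ : FrameF Var Addr) : FrameF Var HAddr :=
  (φ.1, φ.2.1, HEnv HA φ.2.2)

/-- `H_Kont`: componentwise conversion of an implied stack into an unbounded stack. -/
def HKont (HA : Addr ≃ HAddr) (ψ : List (KontF Var Addr)) : List (FrameF Var HAddr) :=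
  ψ.map fun k => HFrame HA k.1

/-- `H_C`: conversion of a finite-state configuration with an implied stack
    into an unbounded-stack configuration. -/
def HC (HA : Addr ≃ HAddr) (c : ConfF Var Addr) (ψ : List (KontF Var Addr)) :
    ConfH Var HAddr :=
  (c.1, HEnv HA c.2.1, HKont HA ψ)

/-- Store precision `σ̂ ⊒Store σ̃`. -/
def StorePrec (HA : Addr ≃ HAddr) (σH : StoreF Var HAddr) (σ : StoreF Var Addr) : Prop :=
  ∀ (a : Addr) (clo : CloF Var Addr), clo ∈ σ a → HClo HA clo ∈ σH (HA a)

/-- Reachable-configurations precision `r̂ ⊒R r̃ (via σ̃κ)`. -/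
def RPrec (HA : Addr ≃ HAddr) (rH : Set (ConfH Var HAddr))
    (r : Set (ConfF Var Addr)) (σκ : KStoreF Var Addr) : Prop :=
  ∀ (e : Exp Var) (ρ : EnvF Var Addr) (aκ : KAddrF Var Addr)
    (ψ : List (KontF Var Addr)),
    (e, ρ, aκ) ∈ r → Implied σκ aκ ψ → (e, HEnv HA ρ, HKont HA ψ) ∈ rH

/-- State-space precision `ξ̂ ⊒Ξ ξ̃`. -/
def XiPrec (HA : Addr ≃ HAddr) (ξH : XiH Var HAddr) (ξ : XiF Var Addr) : Prop :=
  RPrec HA ξH.r ξ.r ξ.σκ ∧ StorePrec HA ξH.σ ξ.σ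

/-- Assumption 2 (allocation equivalence). -/
def AllocEquiv (HA : Addr ≃ HAddr) (alloc : Var → StateF Var Addr → Addr)
    (halloc : Var → StateH Var HAddr → HAddr) : Prop :=
  ∀ (x : Var) (e : Exp Var) (ρ : EnvF Var Addr) (σ : StoreF Var Addr)
    (σκ : KStoreF Var Addr) (aκ : KAddrF Var Addr) (σH : StoreF Var HAddr)
    (ψ : List (KontF Var Addr)),
    StorePrec HA σH σ → Implied σκ aκ ψ →
    halloc x ⟨e, HEnv HA ρ, σH, HKont HA ψ⟩ = HA (alloc x ⟨e, ρ, σ, σκ, aκ⟩)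

/-- Assumption 3 (allocation consistency). -/
def AllocConsistent (alloc : Var → StateF Var Addr → Addr) (e0 : Exp Var) : Prop :=
  ∀ (ξp ξ ξ' : XiF Var Addr) (e e' : Exp Var) (ρ ρ' : EnvF Var Addr)
    (aκ aκ' : KAddrF Var Addr) (σ'' : StoreF Var Addr) (σκ'' : KStoreF Var Addr)
    (x : Var),
    WF alloc e0 ξp ξ →
    StepF alloc ⟨e, ρ, ξ.σ, ξ.σκ, aκ⟩
      ⟨e', upd ρ' x (alloc x ⟨e, ρ, ξ.σ, ξ.σκ, aκ⟩), σ'', σκ'', aκ'⟩ →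
    XiStepF alloc e0 ξ ξ' →
    alloc x ⟨e, ρ, ξ.σ, ξ.σκ, aκ⟩ = alloc x ⟨e, ρ, ξ'.σ, ξ'.σκ, aκ⟩

end P4F

namespace P4F


/-! ### Auxiliary development for the path conversion proof -/

theorem HEnv_upd (HA : Addr ≃ HAddr) (ρ : EnvF Var Addr) (x : Var) (a : Addr) :
    HEnv HA (upd ρ x a) = upd (HEnv HA ρ) x (HA a) := by
  funext y; simp only [HEnv, upd]; split <;> rfl

theorem HEnv_empty (HA : Addr ≃ HAddr) : HEnv HA (emptyEnv : EnvF Var Addr) = emptyEnv := by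
  funext y; rfl

theorem aeval_mono {σ σ' : StoreF Var Addr} (h : SubStore σ σ') (ae : AExp Var)
    (ρ : EnvF Var Addr) : aeval ae ρ σ ⊆ aeval ae ρ σ' := by
  cases ae with
  | var x =>
    cases hx : ρ x with
    | none => simp [aeval, hx]
    | some a => simpa [aeval, hx] using h a
  | lam l => simp [aeval]

theorem aeval_prec (HA : Addr ≃ HAddr) {σH : StoreF Var HAddr} {σ : StoreF Var Addr}
    (h : StorePrec HA σH σ) {ae : AExp Var} {ρ : EnvF Var Addr} {clo : CloF Var Addr}
    (hm : clo ∈ aeval ae ρ σ) : HClo HA clo ∈ aeval ae (HEnv HA ρ) σH := by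
  cases ae with
  | var x =>
    cases hx : ρ x with
    | none => simp [aeval, hx] at hm
    | some a =>
      have hx' : HEnv HA ρ x = some (HA a) := by simp [HEnv, hx]
      simp only [aeval, hx] at hm
      simp only [aeval, hx']
      exact h a clo hm
  | lam l =>
    simp only [aeval, Set.mem_singleton_iff] at hm
    subst hm
    simp [aeval, HClo]

/-- Chains of widened states extracted from a well-formedness derivation. -/
structure ChainData (alloc : Var → StateF Var Addr → Addr) (e0 : Exp Var)
    (N : ℕ) (c : ℕ → XiF Var Addr) : Prop where
  zero : c 0 = initXiF e0
  wf0 : WF alloc e0 (c 0) (c 0)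
  step : ∀ k, k + 1 ≤ N → XiStepF alloc e0 (c k) (c (k+1))
  rest0 : WFRest alloc e0 (c 0) (c 0)
  rest : ∀ k, k + 1 ≤ N → WFRest alloc e0 (c k) (c (k+1))
  wfs : ∀ k, k + 1 ≤ N → WF alloc e0 (c k) (c (k+1))

theorem chain_exists {alloc : Var → StateF Var Addr → Addr} {e0 : Exp Var}
    {ξ ξ' : XiF Var Addr} (h : WF alloc e0 ξ ξ') :
    ∃ N cc, ChainData alloc e0 N cc ∧ cc N = ξ' := by
  induction h with
  | init hrest =>
    exact ⟨0, fun _ => initXiF e0,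
      ⟨rfl, WF.init hrest, fun k hk => absurd hk (by omega), hrest,
        fun k hk => absurd hk (by omega), fun k hk => absurd hk (by omega)⟩, rfl⟩
  | @step ξ'' ξm ξ' hwf hstep hrest ih =>
    obtain ⟨N, cc, hcc, hN⟩ := ih
    refine ⟨N + 1, fun k => if k ≤ N then cc k else ξ', ?_, by simp⟩
    constructor
    · simpa using hcc.zero
    · simpa using hcc.wf0
    · intro k hk
      by_cases h1 : k + 1 ≤ N
      · simpa [show k ≤ N by omega, h1] using hcc.step k h1
      · rw [if_pos (show k ≤ N by omega), if_neg h1, show k = N by omega, hN]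
        exact hstep
    · simpa using hcc.rest0
    · intro k hk
      by_cases h1 : k + 1 ≤ N
      · simpa [show k ≤ N by omega, h1] using hcc.rest k h1
      · rw [if_pos (show k ≤ N by omega), if_neg h1, show k = N by omega, hN]
        exact hrest
    · intro k hk
      by_cases h1 : k + 1 ≤ N
      · simpa [show k ≤ N by omega, h1] using hcc.wfs k h1
      · rw [if_pos (show k ≤ N by omega), if_neg h1, show k = N by omega, hN]
        exact WF.step hwf hstep hrest

namespace ChainData

variable {alloc : Var → StateF Var Addr → Addr} {e0 : Exp Var}
  {N : ℕ} {c : ℕ → XiF Var Addr} (hc : ChainData alloc e0 N c)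

include hc

theorem mono_r : ∀ {k l : ℕ}, k ≤ l → l ≤ N → (c k).r ⊆ (c l).r := by
  intro k l hkl
  induction l, hkl using Nat.le_induction with
  | base => exact fun _ => le_rfl
  | succ l hkl ih =>
    intro hlN
    exact (ih (by omega)).trans ((hc.rest l hlN).1.1)

theorem mono_σ : ∀ {k l : ℕ}, k ≤ l → l ≤ N → SubStore (c k).σ (c l).σ := by
  intro k l hkl
  induction l, hkl using Nat.le_induction with
  | base => exact fun _ _ => le_rfl
  | succ l hkl ih =>
    intro hlN a
    exact ((ih (by omega)) a).trans ((hc.rest l hlN).1.2.1 a)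

theorem mono_σκ : ∀ {k l : ℕ}, k ≤ l → l ≤ N → SubStore (c k).σκ (c l).σκ := by
  intro k l hkl
  induction l, hkl using Nat.le_induction with
  | base => exact fun _ _ => le_rfl
  | succ l hkl ih =>
    intro hlN a
    exact ((ih (by omega)) a).trans ((hc.rest l hlN).1.2.2 a)

theorem halt_empty {k : ℕ} (hk : k ≤ N) : ∀ κ : KontF Var Addr, κ ∉ (c k).σκ ahalt := by
  cases k with
  | zero =>
    intro κ h
    rw [hc.zero] at h
    exact h
  | succ k => exact (hc.rest k hk).2.2.1

theorem r_implied {k : ℕ} (hk : k ≤ N) {cf : ConfF Var Addr} (hm : cf ∈ (c k).r) :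
    ∃ ψ, Implied (c k).σκ cf.2.2 ψ := by
  cases k with
  | zero =>
    rw [hc.zero] at hm
    cases hm
    exact ⟨[], Implied.halt⟩
  | succ k =>
    obtain ⟨ψ, hψ, -⟩ := (hc.rest k hk).2.2.2.1 cf hm
    exact ⟨ψ, hψ⟩

theorem wf_at {k : ℕ} (hk : k ≤ N) : ∃ ξp, WF alloc e0 ξp (c k) := by
  cases k with
  | zero => exact ⟨c 0, hc.wf0⟩
  | succ k => exact ⟨c k, hc.wfs k hk⟩

end ChainData

section Fix

variable {e0 : Exp Var} {halloc : Var → StateH Var HAddr → HAddr}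
  {rH : Set (ConfH Var HAddr)} {σH : StoreF Var HAddr}

theorem fix_init (hfix : XiStepH halloc e0 ⟨rH, σH⟩ ⟨rH, σH⟩) : initConfH e0 ∈ rH := by
  have h : rH = {cc | ∃ ς ∈ succSetH halloc e0 ⟨rH, σH⟩, cc = (ς.e, ς.ρ, ς.κ)} := hfix.1
  rw [h]
  exact ⟨initStateH e0, Set.mem_insert _ _, rfl⟩

theorem fix_step (hfix : XiStepH halloc e0 ⟨rH, σH⟩ ⟨rH, σH⟩)
    {cH : ConfH Var HAddr} (hm : cH ∈ rH) {ς' : StateH Var HAddr}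
    (hs : StepH halloc ⟨cH.1, cH.2.1, σH, cH.2.2⟩ ς') :
    (ς'.e, ς'.ρ, ς'.κ) ∈ rH ∧ SubStore ς'.σ σH := by
  have hmem : ς' ∈ succSetH halloc e0 ⟨rH, σH⟩ := Set.mem_insert_iff.mpr (Or.inr ⟨cH, hm, hs⟩)
  constructor
  · have h : rH = {cc | ∃ ς ∈ succSetH halloc e0 ⟨rH, σH⟩, cc = (ς.e, ς.ρ, ς.κ)} := hfix.1
    rw [h]
    exact ⟨ς', hmem, rfl⟩
  · intro a x hx
    have h : σH = fun a => ⋃ ς ∈ succSetH halloc e0 ⟨rH, σH⟩, ς.σ a := hfix.2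
    have h2 := congrFun h a
    rw [h2]
    exact Set.mem_biUnion hmem hx

theorem pathH_snoc (hfix : XiStepH halloc e0 ⟨rH, σH⟩ ⟨rH, σH⟩)
    {cH : ConfH Var HAddr} (hm : cH ∈ rH)
    (hp : PathH halloc rH σH (initConfH e0) cH) {ς' : StateH Var HAddr}
    (hs : StepH halloc ⟨cH.1, cH.2.1, σH, cH.2.2⟩ ς') :
    (ς'.e, ς'.ρ, ς'.κ) ∈ rH ∧ PathH halloc rH σH (initConfH e0) (ς'.e, ς'.ρ, ς'.κ) := by
  obtain ⟨hm', hsub⟩ := fix_step hfix hm hs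
  refine ⟨hm', hp.step ⟨ς'.σ, ?_, hsub⟩⟩
  exact hs

end Fix

theorem stepF_letCall_aκ {alloc : Var → StateF Var Addr → Addr} {y : Var}
    {f ae : AExp Var} {eb : Exp Var} {ρ : EnvF Var Addr} {σ : StoreF Var Addr}
    {σκ : KStoreF Var Addr} {aκ : KAddrF Var Addr} {ς' : StateF Var Addr}
    (h : StepF alloc ⟨Exp.letCall y f ae eb, ρ, σ, σκ, aκ⟩ ς') : ς'.aκ ≠ ahalt := by
  cases h
  exact fun h => Option.some_ne_none _ h

theorem pathF_implied {alloc : Var → StateF Var Addr → Addr} {ξ ξ' : XiF Var Addr}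
    {p q : ConfF Var Addr × List (KontF Var Addr)}
    (h : PathF alloc ξ ξ' p q) : Implied ξ'.σκ q.1.2.2 q.2 := by
  induction h with
  | refl hm hi => exact hi
  | ret hp hr hκ hr' hsub ih =>
    cases ih with
    | cons h1 h2 h3 => exact h2
  | call hp hκ hsub ih =>
    obtain ⟨σ₁, σκ₁, σ₂, σκ₂, hstep, -⟩ := hsub
    exact Implied.cons hκ ih (stepF_letCall_aκ hstep)

/-- Minimal chain level at which a continuation appears at a given address. -/
noncomputable def jmin (c : ℕ → XiF Var Addr) (κ : KontF Var Addr) (aκ : KAddrF Var Addr) : ℕ :=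
  sInf {j | κ ∈ (c j).σκ aκ}

/-- Stack measure used for the main induction. -/
noncomputable def μstack (c : ℕ → XiF Var Addr) : KAddrF Var Addr → List (KontF Var Addr) → ℕ
  | _, [] => 0
  | aκ, κ :: ψ => 3 ^ (jmin c κ aκ) + μstack c κ.2 ψ

section Chain

variable {alloc : Var → StateF Var Addr → Addr} {e0 : Exp Var}
  {N : ℕ} {c : ℕ → XiF Var Addr} (hc : ChainData alloc e0 N c)

include hc

omit hc in
theorem jmin_le {κ : KontF Var Addr} {aκ : KAddrF Var Addr} {k : ℕ}
    (hk : κ ∈ (c k).σκ aκ) : jmin c κ aκ ≤ k := Nat.sInf_le hk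

omit hc in
theorem jmin_mem {κ : KontF Var Addr} {aκ : KAddrF Var Addr} {k : ℕ}
    (hk : κ ∈ (c k).σκ aκ) : κ ∈ (c (jmin c κ aκ)).σκ aκ :=
  Nat.sInf_mem (s := {j | κ ∈ (c j).σκ aκ}) ⟨k, hk⟩

theorem jmin_pos {κ : KontF Var Addr} {aκ : KAddrF Var Addr} {k : ℕ}
    (hk : κ ∈ (c k).σκ aκ) : 1 ≤ jmin c κ aκ := by
  by_contra h
  have h0 : jmin c κ aκ = 0 := by omega
  have := jmin_mem hk
  rw [h0, hc.zero] at this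
  exact this

/-- Allocation stability along the chain, return steps. -/
theorem alloc_lift_ret {x₂ : Var} {e₂ : Exp Var} {ρκ₂ ρcp : EnvF Var Addr}
    {aκ₂' aκcp : KAddrF Var Addr} {ae₀ : AExp Var}
    (hAC : AllocConsistent alloc e0) {k : ℕ}
    (hκ : ((x₂, e₂, ρκ₂), aκ₂') ∈ (c k).σκ aκcp) :
    ∀ i, k ≤ i → i ≤ N →
      alloc x₂ ⟨Exp.ret ae₀, ρcp, (c k).σ, (c k).σκ, aκcp⟩ =
      alloc x₂ ⟨Exp.ret ae₀, ρcp, (c i).σ, (c i).σκ, aκcp⟩ := by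
  intro i hki
  induction i, hki using Nat.le_induction with
  | base => intro _; rfl
  | succ l hkl ih =>
    intro hlN
    have hlN' : l ≤ N := by omega
    rw [ih hlN']
    have hκl : ((x₂, e₂, ρκ₂), aκ₂') ∈ (c l).σκ aκcp := hc.mono_σκ hkl hlN' _ hκ
    obtain ⟨ξp, hwfp⟩ := hc.wf_at hlN'
    exact hAC ξp (c l) (c (l+1)) (Exp.ret ae₀) e₂ ρcp ρκ₂ aκcp aκ₂' _ _ x₂ hwfp
      (StepF.ret hκl) (hc.step l hlN)

/-- Allocation stability along the chain, call steps. -/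
theorem alloc_lift_call {y xl : Var} {f ae₀ : AExp Var} {eb el : Exp Var}
    {ρcp ρl : EnvF Var Addr} {aκcp : KAddrF Var Addr}
    (hAC : AllocConsistent alloc e0) {k : ℕ}
    (hclo : (Lam.mk xl el, ρl) ∈ aeval f ρcp (c k).σ) :
    ∀ i, k ≤ i → i ≤ N →
      alloc xl ⟨Exp.letCall y f ae₀ eb, ρcp, (c k).σ, (c k).σκ, aκcp⟩ =
      alloc xl ⟨Exp.letCall y f ae₀ eb, ρcp, (c i).σ, (c i).σκ, aκcp⟩ := by
  intro i hki
  induction i, hki using Nat.le_induction with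
  | base => intro _; rfl
  | succ l hkl ih =>
    intro hlN
    have hlN' : l ≤ N := by omega
    rw [ih hlN']
    have hclol : (Lam.mk xl el, ρl) ∈ aeval f ρcp (c l).σ :=
      aeval_mono (hc.mono_σ hkl hlN') f ρcp hclo
    obtain ⟨ξp, hwfp⟩ := hc.wf_at hlN'
    exact hAC ξp (c l) (c (l+1)) (Exp.letCall y f ae₀ eb) el ρcp ρl aκcp _ _ _ xl hwfp
      (StepF.call hclol) (hc.step l hlN)

/-- Provenance of stored continuations: every continuation in the store was
pushed by a genuine call step at the level where it first appears. -/
theorem kont_prov {xκ : Var} {eκ : Exp Var} {ρκ : EnvF Var Addr}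
    {aκ₂ aκc : KAddrF Var Addr} {i : ℕ} (hiN : i ≤ N)
    (hm : ((xκ, eκ, ρκ), aκ₂) ∈ (c i).σκ aκc) :
    ∃ j', j' + 1 = jmin c ((xκ, eκ, ρκ), aκ₂) aκc ∧ j' + 1 ≤ i ∧
      ∃ f ae xl el ρl,
        (Exp.letCall xκ f ae eκ, ρκ, aκ₂) ∈ (c j').r ∧
        (Lam.mk xl el, ρl) ∈ aeval f ρκ ((c j').σ) ∧
        aκc = some (el, upd ρl xl
          (alloc xl ⟨Exp.letCall xκ f ae eκ, ρκ, (c j').σ, (c j').σκ, aκ₂⟩)) := by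
  set κ : KontF Var Addr := ((xκ, eκ, ρκ), aκ₂) with hκdef
  have hjle : jmin c κ aκc ≤ i := jmin_le hm
  have hjpos : 1 ≤ jmin c κ aκc := jmin_pos hc hm
  obtain ⟨j', hj'⟩ : ∃ j', jmin c κ aκc = j' + 1 := ⟨jmin c κ aκc - 1, by omega⟩
  refine ⟨j', hj'.symm, by omega, ?_⟩
  have hmemj : κ ∈ (c (j' + 1)).σκ aκc := by
    have := jmin_mem hm
    rwa [hj'] at this
  have hnot : κ ∉ (c j').σκ aκc := by
    intro hin
    have := jmin_le hin
    omega
  have hσκeq := (hc.step j' (by omega)).2.2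
  have : κ ∈ ⋃ ς ∈ succSetF alloc e0 (c j'), ς.σκ aκc := by
    have h2 := congrFun hσκeq aκc
    rwa [h2] at hmemj
  obtain ⟨ς, hς, hin⟩ := Set.mem_iUnion₂.mp this
  rcases Set.mem_insert_iff.mp hς with hinit | ⟨cp, hcp, hstep⟩
  · subst hinit
    exact absurd hin (Set.notMem_empty κ)
  · obtain ⟨ecp, ρcp, aκcp⟩ := cp
    simp only [stateOfF] at hstep
    cases hstep with
    | call hclo =>
      rename_i y x f ae e e' ρlam
      -- ς.σκ = joinOne (c j').σκ key {((y, e, ρcp), aκcp)}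
      simp only [joinOne] at hin
      split at hin
      case isTrue heq =>
        rcases hin with hin | hin
        · exact absurd hin hnot
        · -- κ = ((y, e, ρcp), aκcp)
          rw [Set.mem_singleton_iff] at hin
          rw [hκdef] at hin
          simp only [Prod.mk.injEq] at hin
          obtain ⟨⟨h1, h2, h3⟩, h4⟩ := hin
          subst h1; subst h2; subst h3; subst h4
          exact ⟨f, ae, x, e', ρlam, hcp, hclo, heq⟩
      case isFalse => exact absurd hin hnot
    | ret hκ => exact absurd hin hnot

end Chain

section MainLemma

variable {alloc : Var → StateF Var Addr → Addr} {e0 : Exp Var}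
  {halloc : Var → StateH Var HAddr → HAddr} {HA : Addr ≃ HAddr}
  {rH : Set (ConfH Var HAddr)} {σH : StoreF Var HAddr}
  {N : ℕ} {c : ℕ → XiF Var Addr}

theorem S_of_A
    (hAE : AllocEquiv HA alloc halloc) (hAC : AllocConsistent alloc e0)
    (hfix : XiStepH halloc e0 ⟨rH, σH⟩ ⟨rH, σH⟩)
    (hc : ChainData alloc e0 N c) {i : ℕ} (hiN : i ≤ N)
    (hA : StorePrec HA σH (c i).σ) :
    ∀ (n m : ℕ), m ≤ i → ∀ (e : Exp Var) (ρ : EnvF Var Addr) (aκ : KAddrF Var Addr),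
      ((e, ρ, aκ) : ConfF Var Addr) ∈ (c m).r →
      ∀ ψ, Implied (c i).σκ aκ ψ → 3 ^ m + μstack c aκ ψ ≤ n →
      ((e, HEnv HA ρ, HKont HA ψ) : ConfH Var HAddr) ∈ rH ∧
        PathH halloc rH σH (initConfH e0) (e, HEnv HA ρ, HKont HA ψ) := by
  intro n
  induction n with
  | zero =>
    intro m _ e ρ aκ _ ψ _ hμ
    have : 1 ≤ 3 ^ m := Nat.one_le_pow _ _ (by norm_num)
    omega
  | succ n IHn =>
    intro m hmi e ρ aκ hmem ψ himp hμ
    cases m with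
    | zero =>
      rw [hc.zero] at hmem
      have hmem' : (e, ρ, aκ) = initConfF e0 := hmem
      simp only [initConfF, Prod.mk.injEq] at hmem'
      obtain ⟨rfl, rfl, rfl⟩ := hmem'
      cases himp with
      | halt =>
        simp only [HKont, List.map_nil, HEnv_empty]
        exact ⟨fix_init hfix, PathH.refl _⟩
      | cons _ _ hne => exact absurd rfl hne
    | succ m =>
      have hm1N : m + 1 ≤ N := le_trans hmi hiN
      have hreq := (hc.step m hm1N).1
      rw [hreq] at hmem
      obtain ⟨ς, hς, heq⟩ := hmem
      rcases Set.mem_insert_iff.mp hς with hinit | ⟨cp, hcp, hstep⟩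
      · subst hinit
        simp only [initStateF, Prod.mk.injEq] at heq
        obtain ⟨rfl, rfl, rfl⟩ := heq
        cases himp with
        | halt =>
          simp only [HKont, List.map_nil, HEnv_empty]
          exact ⟨fix_init hfix, PathH.refl _⟩
        | cons _ _ hne => exact absurd rfl hne
      · obtain ⟨ecp, ρcp, aκcp⟩ := cp
        simp only [stateOfF] at hstep
        cases hstep with
        | call hclo =>
          rename_i y x f ae eb e' ρlam
          clear hς
          dsimp only at heq
          simp only [Prod.mk.injEq] at heq
          obtain ⟨rfl, rfl, rfl⟩ := heq
          -- the configuration is the entry of its continuation address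
          cases himp with
          | cons hmemκ himp₂ hne =>
            rename_i φκ aκ₂ ψ₂
            obtain ⟨xκ, eκ, ρκ⟩ := φκ
            obtain ⟨j', hjeq, hj1i, f₂, ae₂, xl, el, ρl, hcaller, hclo₂, hkey⟩ :=
              kont_prov hc hiN hmemκ
            injection hkey with hkey'
            simp only [Prod.mk.injEq] at hkey'
            obtain ⟨hel, hρg⟩ := hkey'
            subst hel
            have hmeas : 3 ^ j' + μstack c aκ₂ ψ₂ ≤ n := by
              simp only [μstack] at hμ
              rw [← hjeq] at hμ
              have p1 : (1:ℕ) ≤ 3 ^ (m+1) := Nat.one_le_pow _ _ (by norm_num)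
              have p2 : (3:ℕ) ^ (j'+1) = 3 * 3 ^ j' := by rw [pow_succ]; ring
              have p3 : (1:ℕ) ≤ 3 ^ j' := Nat.one_le_pow _ _ (by norm_num)
              omega
            obtain ⟨hrmem, hrpath⟩ := IHn j' (by omega) (Exp.letCall xκ f₂ ae₂ eκ) ρκ aκ₂
              hcaller ψ₂ himp₂ hmeas
            have hcloH : (Lam.mk xl e, HEnv HA ρl) ∈ aeval f₂ (HEnv HA ρκ) σH := by
              have h1 : (Lam.mk xl e, ρl) ∈ aeval f₂ ρκ (c i).σ :=
                aeval_mono (hc.mono_σ (by omega) hiN) _ _ hclo₂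
              exact aeval_prec HA hA h1
            have hstepH := StepH.call (halloc := halloc) (y := xκ) (ae := ae₂) (e := eκ) (κ := HKont HA ψ₂) hcloH
            have hall := hAE xl (Exp.letCall xκ f₂ ae₂ eκ) ρκ ((c i).σ) ((c i).σκ)
              aκ₂ σH ψ₂ hA himp₂
            have hlift := alloc_lift_call hc (y := xκ) (ae₀ := ae₂) (eb := eκ) (aκcp := aκ₂) hAC hclo₂ i (by omega) hiN
            have hres := pathH_snoc hfix hrmem hrpath hstepH
            -- convert the result to the goal
            rw [hρg, HEnv_upd, show HA (alloc xl ⟨Exp.letCall xκ f₂ ae₂ eκ, ρκ,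
                (c j').σ, (c j').σκ, aκ₂⟩) = halloc xl ⟨Exp.letCall xκ f₂ ae₂ eκ,
                HEnv HA ρκ, σH, HKont HA ψ₂⟩ by rw [hall, ← hlift]]
            simp only [HKont, List.map_cons, HFrame]
            exact hres
        | ret hκF =>
          rename_i x₂ ae₀ e₂ ρκ₂ aκ₂'
          clear hς
          dsimp only at heq
          simp only [Prod.mk.injEq] at heq
          obtain ⟨rfl, rfl, rfl⟩ := heq
          have hnecp : aκcp ≠ ahalt := by
            intro h; rw [h] at hκF; exact hc.halt_empty (by omega) _ hκF
          have himp' : Implied (c i).σκ aκcp (((x₂, e, ρκ₂), aκ) :: ψ) :=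
            Implied.cons (hc.mono_σκ (by omega) hiN _ hκF) himp hnecp
          have hmeas : 3 ^ m + μstack c aκcp (((x₂, e, ρκ₂), aκ) :: ψ) ≤ n := by
            simp only [μstack]
            have hj : jmin c ((x₂, e, ρκ₂), aκ) aκcp ≤ m := jmin_le hκF
            have h3 : (3:ℕ) ^ (jmin c ((x₂, e, ρκ₂), aκ) aκcp) ≤ 3 ^ m :=
              Nat.pow_le_pow_right (by norm_num) hj
            have p1 : (1:ℕ) ≤ 3 ^ m := Nat.one_le_pow _ _ (by norm_num)
            have p2 : (3:ℕ) ^ (m+1) = 3 * 3 ^ m := by rw [pow_succ]; ring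
            omega
          obtain ⟨hrmem, hrpath⟩ := IHn m (by omega) (Exp.ret ae₀) ρcp aκcp hcp
            (((x₂, e, ρκ₂), aκ) :: ψ) himp' hmeas
          have hstepH := StepH.ret (halloc := halloc) (x := x₂) (ae := ae₀) (e := e)
            (ρ := HEnv HA ρcp) (ρκ := HEnv HA ρκ₂) (σ := σH) (κ := HKont HA ψ)
          have hall := hAE x₂ (Exp.ret ae₀) ρcp ((c i).σ) ((c i).σκ) aκcp σH
            (((x₂, e, ρκ₂), aκ) :: ψ) hA himp'
          have hall' : halloc x₂ ⟨Exp.ret ae₀, HEnv HA ρcp, σH,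
              (x₂, e, HEnv HA ρκ₂) :: HKont HA ψ⟩
              = HA (alloc x₂ ⟨Exp.ret ae₀, ρcp, (c i).σ, (c i).σκ, aκcp⟩) := hall
          have hlift := alloc_lift_ret hc (ρcp := ρcp) (ae₀ := ae₀) hAC hκF i (by omega) hiN
          have hres := pathH_snoc hfix hrmem hrpath hstepH
          rw [HEnv_upd, hlift, ← hall']
          exact hres


theorem A_succ
    (hAE : AllocEquiv HA alloc halloc) (hAC : AllocConsistent alloc e0)
    (hfix : XiStepH halloc e0 ⟨rH, σH⟩ ⟨rH, σH⟩)
    (hc : ChainData alloc e0 N c) {i : ℕ} (hi1N : i + 1 ≤ N)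
    (hA : StorePrec HA σH (c i).σ)
    (hS : ∀ m ≤ i, ∀ (e : Exp Var) (ρ : EnvF Var Addr) (aκ : KAddrF Var Addr),
      ((e, ρ, aκ) : ConfF Var Addr) ∈ (c m).r → ∀ ψ, Implied (c i).σκ aκ ψ →
      ((e, HEnv HA ρ, HKont HA ψ) : ConfH Var HAddr) ∈ rH ∧
        PathH halloc rH σH (initConfH e0) (e, HEnv HA ρ, HKont HA ψ)) :
    StorePrec HA σH (c (i+1)).σ := by
  intro a clo hclo
  have h2 := congrFun ((hc.step i hi1N).2.1) a
  rw [h2] at hclo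
  obtain ⟨ς, hς, hin⟩ := Set.mem_iUnion₂.mp hclo
  rcases Set.mem_insert_iff.mp hς with hinit | ⟨cp, hcp, hstep⟩
  · subst hinit; exact absurd hin (Set.notMem_empty _)
  · obtain ⟨ecp, ρcp, aκcp⟩ := cp
    simp only [stateOfF] at hstep
    cases hstep with
    | call hclo₀ =>
      rename_i y x f ae eb e' ρlam
      simp only [joinOne] at hin
      split at hin
      case isFalse => exact hA a clo hin
      case isTrue heqa =>
        rcases hin with hin | hin
        · exact hA a clo hin
        · subst heqa
          obtain ⟨ψp, hψp⟩ := hc.r_implied (show i ≤ N by omega) hcp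
          obtain ⟨hrmem, hrpath⟩ := hS i le_rfl _ _ _ hcp ψp hψp
          have hcloH : (Lam.mk x e', HEnv HA ρlam) ∈ aeval f (HEnv HA ρcp) σH :=
            aeval_prec HA hA hclo₀
          have hstepH := StepH.call (halloc := halloc) (y := y) (ae := ae) (e := eb)
            (κ := HKont HA ψp) hcloH
          have hall := hAE x (Exp.letCall y f ae eb) ρcp ((c i).σ) ((c i).σκ) aκcp σH ψp hA hψp
          have hsub := (fix_step hfix hrmem hstepH).2
          have hmem2 : HClo HA clo ∈ joinOne σH
              (halloc x ⟨Exp.letCall y f ae eb, HEnv HA ρcp, σH, HKont HA ψp⟩)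
              (aeval ae (HEnv HA ρcp) σH)
              (halloc x ⟨Exp.letCall y f ae eb, HEnv HA ρcp, σH, HKont HA ψp⟩) := by
            simp only [joinOne, if_pos rfl]
            exact Or.inr (aeval_prec HA hA hin)
          have hfin := hsub _ hmem2
          rw [hall] at hfin
          exact hfin
    | ret hκF =>
      rename_i x₂ ae₀ e₂ ρκ₂ aκ₂'
      simp only [joinOne] at hin
      split at hin
      case isFalse => exact hA a clo hin
      case isTrue heqa =>
        rcases hin with hin | hin
        · exact hA a clo hin
        · subst heqa
          have hψtail : ∃ ψt, Implied (c i).σκ aκ₂' ψt := by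
            cases haκ : aκ₂' with
            | none => exact ⟨[], Implied.halt⟩
            | some pr =>
              rw [haκ] at hκF
              obtain ⟨j', hjeq, hj1i, f₂, ae₂, xl, el, ρl, hcaller, hclo₂, hkey⟩ :=
                kont_prov hc (show i ≤ N by omega) hκF
              have hcaller' : ((Exp.letCall x₂ f₂ ae₂ e₂, ρκ₂, some pr) : ConfF Var Addr)
                  ∈ (c i).r := hc.mono_r (by omega) (by omega) hcaller
              exact hc.r_implied (show i ≤ N by omega) hcaller'
          obtain ⟨ψt, hψt⟩ := hψtail
          have hne : aκcp ≠ ahalt := fun h =>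
            hc.halt_empty (show i ≤ N by omega) _ (h ▸ hκF)
          have himp' : Implied (c i).σκ aκcp (((x₂, e₂, ρκ₂), aκ₂') :: ψt) :=
            Implied.cons hκF hψt hne
          obtain ⟨hrmem, hrpath⟩ := hS i le_rfl _ _ _ hcp _ himp'
          have hstepH := StepH.ret (halloc := halloc) (x := x₂) (ae := ae₀) (e := e₂)
            (ρ := HEnv HA ρcp) (ρκ := HEnv HA ρκ₂) (σ := σH) (κ := HKont HA ψt)
          have hall := hAE x₂ (Exp.ret ae₀) ρcp ((c i).σ) ((c i).σκ) aκcp σH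
            (((x₂, e₂, ρκ₂), aκ₂') :: ψt) hA himp'
          have hall' : halloc x₂ ⟨Exp.ret ae₀, HEnv HA ρcp, σH,
              (x₂, e₂, HEnv HA ρκ₂) :: HKont HA ψt⟩
              = HA (alloc x₂ ⟨Exp.ret ae₀, ρcp, (c i).σ, (c i).σκ, aκcp⟩) := hall
          have hsub := (fix_step hfix hrmem hstepH).2
          have hmem2 : HClo HA clo ∈ joinOne σH
              (halloc x₂ ⟨Exp.ret ae₀, HEnv HA ρcp, σH, (x₂, e₂, HEnv HA ρκ₂) :: HKont HA ψt⟩)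
              (aeval ae₀ (HEnv HA ρcp) σH)
              (halloc x₂ ⟨Exp.ret ae₀, HEnv HA ρcp, σH, (x₂, e₂, HEnv HA ρκ₂) :: HKont HA ψt⟩) := by
            simp only [joinOne, if_pos rfl]
            exact Or.inr (aeval_prec HA hA hin)
          have hfin := hsub _ hmem2
          rw [hall'] at hfin
          exact hfin

theorem main_AS
    (hAE : AllocEquiv HA alloc halloc) (hAC : AllocConsistent alloc e0)
    (hfix : XiStepH halloc e0 ⟨rH, σH⟩ ⟨rH, σH⟩)
    (hc : ChainData alloc e0 N c) :
    ∀ i, i ≤ N → StorePrec HA σH (c i).σ ∧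
      (∀ m ≤ i, ∀ (e : Exp Var) (ρ : EnvF Var Addr) (aκ : KAddrF Var Addr),
        ((e, ρ, aκ) : ConfF Var Addr) ∈ (c m).r → ∀ ψ, Implied (c i).σκ aκ ψ →
        ((e, HEnv HA ρ, HKont HA ψ) : ConfH Var HAddr) ∈ rH ∧
          PathH halloc rH σH (initConfH e0) (e, HEnv HA ρ, HKont HA ψ)) := by
  intro i
  induction i using Nat.strong_induction_on with
  | _ i IH =>
    intro hiN
    have hA : StorePrec HA σH (c i).σ := by
      cases i with
      | zero =>
        intro a clo hclo2
        rw [hc.zero] at hclo2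
        exact absurd hclo2 (Set.notMem_empty _)
      | succ i' =>
        obtain ⟨hA', hS'⟩ := IH i' (by omega) (by omega)
        exact A_succ hAE hAC hfix hc hiN hA' hS'
    refine ⟨hA, ?_⟩
    intro m hmi e ρ aκ hmem ψ himp
    exact S_of_A hAE hAC hfix hc hiN hA (3 ^ m + μstack c aκ ψ) m hmi e ρ aκ hmem ψ himp le_rfl

end MainLemma
/-- **Path conversion** (Lemma 3).
If `(e, ρ̃, ãκ) ∈ r̃` where `wf(ξ̃, (r̃, σ̃, σ̃κ))` and `(r̂, σ̂)` is a fixed point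
of `⤳̂Ξ`, then every finite-state path from `((e₀, ∅, ã_halt), ε)` to
`((e, ρ̃, ãκ), ψ̃)` implies a corresponding unbounded-stack path from
`(e₀, ∅, ε)` to `H_C((e, ρ̃, ãκ), ψ̃)` (via `r̂`, `σ̂`). -/
theorem path_conversion
    {Var Addr HAddr : Type} (e0 : Exp Var)
    (alloc : Var → StateF Var Addr → Addr)
    (halloc : Var → StateH Var HAddr → HAddr)
    (HA : Addr ≃ HAddr)
    (hAllocEquiv : AllocEquiv HA alloc halloc)
    (hAllocConsistent : AllocConsistent alloc e0)
    (ξ : XiF Var Addr) (r : Set (ConfF Var Addr)) (σ : StoreF Var Addr)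
    (σκ : KStoreF Var Addr)
    (hwf : WF alloc e0 ξ ⟨r, σ, σκ⟩)
    (e : Exp Var) (ρ : EnvF Var Addr) (aκ : KAddrF Var Addr)
    (hmem : (e, ρ, aκ) ∈ r)
    (rH : Set (ConfH Var HAddr)) (σH : StoreF Var HAddr)
    (hfix : XiStepH halloc e0 ⟨rH, σH⟩ ⟨rH, σH⟩)
    (ψ : List (KontF Var Addr))
    (hpath : PathF alloc ξ ⟨r, σ, σκ⟩ (initConfF e0, []) ((e, ρ, aκ), ψ)) :
    PathH halloc rH σH (initConfH e0) (HC HA (e, ρ, aκ) ψ) := by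
  obtain ⟨N, c, hc, hN⟩ := chain_exists hwf
  have himp : Implied σκ aκ ψ := pathF_implied hpath
  have h := (main_AS hAllocEquiv hAllocConsistent hfix hc N le_rfl).2 N le_rfl e ρ aκ
    (by rw [hN]; exact hmem) ψ (by rw [hN]; exact himp)
  exact h.2

end P4F
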